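/- arXiv:1009.4364 — 2 statements merged into one kernel-verified Lean document; each statement's English description precedes it below -/
import Mathlib

section
/- Let h ∈ ℤ[x] be a polynomial with nonzero constant term, let w = h(x)a ∈ W, and let H = ⟨b, w⟩ be the corresponding exemplary subgroup of ℤ wr ℤ, with generating set {b, w} for H and the standard generating set {a, b} for ℤ wr ℤ. Then the polynomial distortion of h and the subgroup distortion of H are equivalent: Δ_h(l) ≈ Δ_H^{ℤ wr ℤ}(l). -/
open scoped Pointwise

namespace DistortionPaper

section Defs

variable (A B : Type*) [Group A] [Group B]

/-- The base group of the restricted wreath product: finitely supported functions `B → A`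
under pointwise multiplication, as a subgroup of `B → A`. -/
def WreathBase : Subgroup (B → A) where
  carrier := {f | (Function.mulSupport f).Finite}
  one_mem' := by
    simp [Function.mulSupport_one]
  mul_mem' := by
    intro f g hf hg
    exact ((Set.Finite.union hf hg).subset (Function.mulSupport_mul f g))
  inv_mem' := by
    intro f hf
    simpa [Function.mulSupport_inv] using hf

/-- The shift automorphism of the base group: `(g ∘ f)(x) = f(x * g)`. -/
def wreathShift (g : B) : WreathBase A B ≃* WreathBase A B where
  toFun f := ⟨fun x => (f : B → A) (x * g), by
    have h : Function.mulSupport (fun x => (f : B → A) (x * g))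
        ⊆ (fun x : B => x * g) ⁻¹' Function.mulSupport (f : B → A) := fun x hx => hx
    exact (Set.Finite.preimage (Set.injOn_of_injective (mul_left_injective g)) f.2).subset h⟩
  invFun f := ⟨fun x => (f : B → A) (x * g⁻¹), by
    have h : Function.mulSupport (fun x => (f : B → A) (x * g⁻¹))
        ⊆ (fun x : B => x * g⁻¹) ⁻¹' Function.mulSupport (f : B → A) := fun x hx => hx
    exact (Set.Finite.preimage (Set.injOn_of_injective (mul_left_injective g⁻¹)) f.2).subset h⟩
  left_inv f := Subtype.ext <| funext fun x => by simp [mul_assoc]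
  right_inv f := Subtype.ext <| funext fun x => by simp [mul_assoc]
  map_mul' f₁ f₂ := Subtype.ext <| funext fun _ => rfl

/-- The action of `B` on the base group by shifts. -/
def wreathAction : B →* MulAut (WreathBase A B) where
  toFun g := wreathShift A B g
  map_one' := by
    refine MulEquiv.ext fun f => Subtype.ext <| funext fun x => ?_
    show (f : B → A) (x * 1) = (f : B → A) x
    rw [mul_one]
  map_mul' g₁ g₂ := by
    refine MulEquiv.ext fun f => Subtype.ext <| funext fun x => ?_
    show (f : B → A) (x * (g₁ * g₂)) = (f : B → A) (x * g₁ * g₂)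
    rw [mul_assoc]

/-- The restricted wreath product `A wr B`. -/
abbrev WreathProduct := WreathBase A B ⋊[wreathAction A B] B

/-- The element of the base group supported at `1 ∈ B` with value `a`. -/
noncomputable def toBase (a : A) : WreathBase A B := by
  classical
  exact ⟨fun x => if x = (1 : B) then a else 1, by
    apply Set.Finite.subset (Set.finite_singleton (1 : B))
    intro x hx
    simp only [Function.mem_mulSupport] at hx
    simp only [Set.mem_singleton_iff]
    by_contra hne
    rw [if_neg hne] at hx
    exact hx rfl⟩

/-- The canonical copy of `A` in `A wr B` (functions supported at `1`). -/
noncomputable def ofPassive (a : A) : WreathProduct A B :=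
  SemidirectProduct.inl (toBase A B a)

/-- The canonical copy of `B` in `A wr B`. -/
def ofActive (g : B) : WreathProduct A B := SemidirectProduct.inr g

/-- The generating set `S ∪ T` of `A wr B` obtained from generating sets `S` of `A`
and `T` of `B`. -/
def wreathGen (S : Set A) (T : Set B) : Set (WreathProduct A B) :=
  (fun a => ofPassive A B a) '' S ∪ (fun g => ofActive A B g) '' T

end Defs

/-- Word length of `g` with respect to the set `T`: the least `n` such that `g` is a
product of `n` elements of `T ∪ T⁻¹` (and `0` if no such `n` exists). -/
noncomputable def wordLength {G : Type*} [Group G] (T : Set G) (g : G) : ℕ :=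
  sInf {n | ∃ f : Fin n → G, (∀ i, f i ∈ T ∪ T⁻¹) ∧ (List.ofFn f).prod = g}

/-- The distortion function of a subgroup `H` of `G`, where `T` is a generating set of `G`
and `S` a generating set of `H`. -/
noncomputable def distortion {G : Type*} [Group G] (T : Set G) (H : Subgroup G)
    (S : Set H) (l : ℕ) : ℕ :=
  sSup (wordLength S '' {h : H | wordLength T (h : G) ≤ l})

/-- `f ⪯ g` : there is `C > 0` with `f l ≤ C * g (C * l)` for all `l`. -/
def Dominates (f g : ℕ → ℕ) : Prop := ∃ C : ℕ, 0 < C ∧ ∀ l, f l ≤ C * g (C * l)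

/-- `f ≈ g` : `f ⪯ g` and `g ⪯ f`. -/
def DistEquiv (f g : ℕ → ℕ) : Prop := Dominates f g ∧ Dominates g f

/-- A subgroup is subnormal if there is a finite chain from it to the whole group,
each term normal in the next. -/
def IsSubnormal {G : Type*} [Group G] (H : Subgroup G) : Prop :=
  ∃ (n : ℕ) (c : ℕ → Subgroup G), c 0 = H ∧ c n = ⊤ ∧
    ∀ i < n, c i ≤ c (i + 1) ∧ ∀ x ∈ c (i + 1), ∀ h ∈ c i, x * h * x⁻¹ ∈ c i

/-- `ℤ` as a multiplicative group. -/
abbrev Mℤ := Multiplicative ℤ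

/-- The wreath product `ℤ wr ℤ`. -/
abbrev ZwrZ := WreathProduct Mℤ Mℤ

/-- The standard generator `a` of `ℤ wr ℤ` (passive copy, supported at `1`). -/
noncomputable def aZ : ZwrZ := ofPassive Mℤ Mℤ (Multiplicative.ofAdd 1)

/-- The standard generator `b` of `ℤ wr ℤ` (active copy). -/
def bZ : ZwrZ := ofActive Mℤ Mℤ (Multiplicative.ofAdd 1)


/-- `S(f)`: the sum of the absolute values of the coefficients of `f`. -/
def polyS (f : Polynomial ℤ) : ℕ := ∑ i ∈ f.support, (f.coeff i).natAbs

/-- The distortion function of a polynomial `h ∈ ℤ[x]`: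
`Δ_h(l) = sup { S(f) : deg f ≤ l, S(hf) ≤ l }`. -/
noncomputable def polyDistortion (h : Polynomial ℤ) (l : ℕ) : ℕ :=
  sSup {n | ∃ f : Polynomial ℤ, f.natDegree ≤ l ∧ polyS (h * f) ≤ l ∧ polyS f = n}

/-- The element `h(x)a = Σ_j d_j (bʲ a b⁻ʲ)` of the base group of `ℤ wr ℤ`, for
`h(x) = Σ_j d_j xʲ ∈ ℤ[x]`. -/
noncomputable def polyElem (h : Polynomial ℤ) : WreathBase Mℤ Mℤ :=
  ∏ j ∈ h.support,
    (wreathAction Mℤ Mℤ (Multiplicative.ofAdd (j : ℤ))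
        (toBase Mℤ Mℤ (Multiplicative.ofAdd 1))) ^ (h.coeff j)

/-- The element `w = h(x)a` of `ℤ wr ℤ`. -/
noncomputable def wPoly (h : Polynomial ℤ) : ZwrZ := SemidirectProduct.inl (polyElem h)

/-- The exemplary subgroup `H = ⟨b, h(x)a⟩` of `ℤ wr ℤ` associated with `h ∈ ℤ[x]`. -/
noncomputable def exemplary (h : Polynomial ℤ) : Subgroup ZwrZ :=
  Subgroup.closure {bZ, wPoly h}

/-- The generating set `{b, w}` of the exemplary subgroup. -/
noncomputable def exemplaryGens (h : Polynomial ℤ) : Set ↥(exemplary h) :=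
  {⟨bZ, Subgroup.subset_closure (Set.mem_insert _ _)⟩,
   ⟨wPoly h, Subgroup.subset_closure (Set.mem_insert_iff.mpr (Or.inr rfl))⟩}


/-!
Write every element of `ℤ wr ℤ` as `c(x)a · bᵗ` with `c` a Laurent polynomial. A word of length
`n` in `{e(x)a, b}` (`e = 1` for `{a, b}`, `e = h` for `{b, w}`) multiplies out to `(e q)(x)a · bᵗ`
with `S(q)`, `|t|` and the support of `q` bounded by `n`; conversely, Horner's scheme
`p = p(0) + x · (p div x)` writes `(e p)(x)a · bⁿ`, for `deg p ≤ n`, as a word of length `S(p) + n`.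

So `(hf)(x)a` has `{a, b}`-length `O(S(hf) + deg(hf))` but `{b, w}`-length at least `S(f)`, which
gives `Δ_h ⪯ Δ_H`. Conversely, an element of `H` of `{a, b}`-length `l` is `(hq)(x)a · bᵗ` with `hq`
supported in `[-l, l]` and `S(hq) ≤ l`. As `h(0) ≠ 0`, `xˡ q` is then a polynomial `f` of degree
at most `2l`, so the element has `{b, w}`-length `O(l + S(f)) = O(l + Δ_h(2l))`, and the linear
term is absorbed by `l ≤ Δ_h(S(h) l)`.
-/

section Words

variable {G : Type*} [Group G] {T : Set G}

def HasWord (T : Set G) (g : G) (n : ℕ) : Prop :=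
  ∃ L : List G, (∀ x ∈ L, x ∈ T ∪ T⁻¹) ∧ L.length = n ∧ L.prod = g

theorem wordLength_eq_sInf (g : G) : wordLength T g = sInf {n | HasWord T g n} := by
  refine congrArg sInf (Set.ext fun n => ⟨?_, ?_⟩)
  · rintro ⟨f, hf, hprod⟩
    exact ⟨List.ofFn f, by simpa using hf, List.length_ofFn, hprod⟩
  · rintro ⟨L, hL, rfl, hprod⟩
    exact ⟨L.get, fun i => hL _ (L.get_mem i), by simpa using hprod⟩

namespace HasWord

theorem one : HasWord T 1 0 := ⟨[], by simp, rfl, rfl⟩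

theorem of_mem {g : G} (hg : g ∈ T) : HasWord T g 1 := ⟨[g], by simp [hg], rfl, by simp⟩

theorem mul {g g' : G} {n n' : ℕ} (h : HasWord T g n) (h' : HasWord T g' n') :
    HasWord T (g * g') (n + n') := by
  obtain ⟨L, hL, rfl, rfl⟩ := h
  obtain ⟨L', hL', rfl, rfl⟩ := h'
  exact ⟨L ++ L', by simpa [or_imp, forall_and] using And.intro hL hL', by simp, by simp⟩

theorem inv {g : G} {n : ℕ} (h : HasWord T g n) : HasWord T g⁻¹ n := by
  obtain ⟨L, hL, rfl, rfl⟩ := h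
  refine ⟨(L.map (·⁻¹)).reverse, ?_, by simp, (List.prod_inv_reverse L).symm⟩
  simp only [List.mem_reverse, List.mem_map]
  rintro _ ⟨x, hx, rfl⟩
  simpa [or_comm] using hL x hx

theorem pow {g : G} {n : ℕ} (h : HasWord T g n) (k : ℕ) : HasWord T (g ^ k) (k * n) := by
  induction k with
  | zero => simpa using one
  | succ k ih => simpa [pow_succ, Nat.succ_mul] using ih.mul h

theorem zpow {g : G} {n : ℕ} (h : HasWord T g n) (k : ℤ) : HasWord T (g ^ k) (k.natAbs * n) := by
  obtain ⟨k, rfl | rfl⟩ := Int.eq_nat_or_neg k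
  · simpa using h.pow k
  · simpa using (h.pow k).inv

theorem mem_closure {g : G} {n : ℕ} (h : HasWord T g n) : g ∈ Subgroup.closure T := by
  obtain ⟨L, hL, -, rfl⟩ := h
  refine list_prod_mem fun x hx => ?_
  rcases hL x hx with hx | hx
  · exact Subgroup.subset_closure hx
  · simpa using inv_mem (Subgroup.subset_closure (Set.mem_inv.1 hx))

theorem wordLength_le {g : G} {n : ℕ} (h : HasWord T g n) : wordLength T g ≤ n := by
  rw [wordLength_eq_sInf]
  exact Nat.sInf_le h

end HasWord

theorem wordLength_one : wordLength T 1 = 0 :=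
  Nat.le_zero.1 HasWord.one.wordLength_le

theorem exists_hasWord_of_mem_closure {g : G} (hg : g ∈ Subgroup.closure T) :
    ∃ n, HasWord T g n := by
  have hg' : g ∈ (Subgroup.closure T).toSubmonoid := hg
  rw [Subgroup.closure_toSubmonoid] at hg'
  obtain ⟨L, hL, hprod⟩ := Submonoid.exists_list_of_mem_closure hg'
  exact ⟨L.length, L, hL, rfl, hprod⟩

theorem hasWord_wordLength {g : G} (hg : g ∈ Subgroup.closure T) :
    HasWord T g (wordLength T g) := by
  rw [wordLength_eq_sInf]
  exact Nat.sInf_mem (exists_hasWord_of_mem_closure hg)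

theorem hasWord_subtype_iff {H : Subgroup G} {S : Set H} {x : H} {n : ℕ} :
    HasWord S x n ↔ HasWord ((↑) '' S) (x : G) n := by
  constructor
  · rintro ⟨L, hL, rfl, rfl⟩
    refine ⟨L.map (↑), ?_, by simp, by simp⟩
    simp only [List.mem_map]
    rintro _ ⟨y, hy, rfl⟩
    rcases hL y hy with hy | hy
    · exact Or.inl ⟨y, hy, rfl⟩
    · exact Or.inr ⟨y⁻¹, hy, rfl⟩
  · rintro ⟨L, hL, rfl, hprod⟩
    have hmem : ∀ y ∈ L, y ∈ H := by
      intro y hy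
      rcases hL y hy with ⟨z, -, rfl⟩ | ⟨z, -, hz⟩
      · exact z.2
      · rw [← inv_inv y, ← hz]
        exact inv_mem z.2
    lift L to List H using hmem
    refine ⟨L, fun y hy => ?_, by simp, Subtype.ext (by simpa using hprod)⟩
    rcases hL _ (List.mem_map_of_mem hy) with ⟨z, hz, hzy⟩ | ⟨z, hz, hzy⟩
    · exact Or.inl (Subtype.ext hzy ▸ hz)
    · have hzy' : z = y⁻¹ := Subtype.ext (by simpa using hzy)
      exact Or.inr (show y⁻¹ ∈ S from hzy' ▸ hz)

theorem wordLength_subtype {H : Subgroup G} (S : Set H) (x : H) :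
    wordLength S x = wordLength ((↑) '' S) (x : G) := by
  simp only [wordLength_eq_sInf, hasWord_subtype_iff]

theorem finite_setOf_wordLength_le (hT : T.Finite) (hgen : Subgroup.closure T = ⊤) (l : ℕ) :
    {g : G | wordLength T g ≤ l}.Finite := by
  have hsub : {g : G | wordLength T g ≤ l} ⊆ ⋃ n ∈ Set.Iic l,
      (fun f : Fin n → G => (List.ofFn f).prod) '' Set.pi Set.univ fun _ => T ∪ T⁻¹ := by
    intro g hg
    obtain ⟨L, hL, hlen, rfl⟩ := hasWord_wordLength (hgen ▸ Subgroup.mem_top g : g ∈ _)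
    refine Set.mem_biUnion (x := L.length) (by simpa [hlen] using hg) ⟨L.get, ?_, by simp⟩
    exact fun i _ => hL _ (L.get_mem i)
  exact ((Set.finite_Iic l).biUnion fun n _ =>
    ((Set.Finite.pi fun _ => hT.union hT.inv)).image _).subset hsub

end Words

section AbsSum

variable {α β : Type*}

def absSum (c : α →₀ ℤ) : ℕ := c.sum fun _ a => a.natAbs

theorem absSum_eq_sum_of_support_subset {c : α →₀ ℤ} {s : Finset α} (hs : c.support ⊆ s) :
    absSum c = ∑ i ∈ s, (c i).natAbs :=
  Finsupp.sum_of_support_subset c hs _ fun _ _ => rfl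

theorem absSum_add_le [DecidableEq α] (c d : α →₀ ℤ) : absSum (c + d) ≤ absSum c + absSum d := by
  rw [absSum_eq_sum_of_support_subset Finsupp.support_add,
    absSum_eq_sum_of_support_subset Finset.subset_union_left,
    absSum_eq_sum_of_support_subset Finset.subset_union_right, ← Finset.sum_add_distrib]
  exact Finset.sum_le_sum fun i _ => Int.natAbs_add_le _ _

theorem absSum_single (a : α) (k : ℤ) : absSum (Finsupp.single a k) = k.natAbs :=
  Finsupp.sum_single_index rfl

theorem absSum_mapDomain {f : α → β} (hf : Function.Injective f) (c : α →₀ ℤ) :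
    absSum (Finsupp.mapDomain f c) = absSum c :=
  Finsupp.sum_mapDomain_index_inj hf

theorem natAbs_le_absSum (c : α →₀ ℤ) (a : α) : (c a).natAbs ≤ absSum c := by
  by_cases ha : a ∈ c.support
  · exact Finset.single_le_sum (f := fun i => (c i).natAbs) (fun _ _ => Nat.zero_le _) ha
  · simp [Finsupp.notMem_support_iff.1 ha]

end AbsSum

section PolyS

open Polynomial

theorem polyS_eq_absSum (p : ℤ[X]) : polyS p = absSum p.toFinsupp.coeff := rfl

theorem natAbs_coeff_le_polyS (p : ℤ[X]) (i : ℕ) : (p.coeff i).natAbs ≤ polyS p :=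
  natAbs_le_absSum p.toFinsupp.coeff i

theorem polyS_pos {p : ℤ[X]} (hp : p ≠ 0) : 0 < polyS p :=
  (Int.natAbs_pos.2 (leadingCoeff_ne_zero.2 hp)).trans_le (natAbs_coeff_le_polyS p p.natDegree)

theorem polyS_eq_sum_range {p : ℤ[X]} {N : ℕ} (hp : p.natDegree < N) :
    polyS p = ∑ i ∈ Finset.range N, (p.coeff i).natAbs :=
  Finset.sum_subset (supp_subset_range hp) fun i _ hi => by simp [notMem_support_iff.1 hi]

theorem polyS_C (k : ℤ) : polyS (C k) = k.natAbs := by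
  rw [polyS_eq_sum_range (N := 1) (by simp)]
  simp

theorem polyS_mul_C (p : ℤ[X]) (k : ℤ) : polyS (p * C k) = polyS p * k.natAbs := by
  rw [polyS_eq_sum_range (Nat.lt_succ_of_le (natDegree_mul_C_le p k)),
    polyS_eq_sum_range (Nat.lt_succ_self _), Finset.sum_mul]
  simp only [coeff_mul_C, Int.natAbs_mul]

theorem polyS_eq_natAbs_coeff_zero_add_polyS_divX (p : ℤ[X]) :
    polyS p = (p.coeff 0).natAbs + polyS p.divX := by
  rw [polyS_eq_sum_range (N := p.natDegree + 2) (by omega), Finset.sum_range_succ', add_comm,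
    polyS_eq_sum_range (Nat.lt_succ_of_le natDegree_divX_le)]
  simp only [coeff_divX]

end PolyS

section Laurent

open Polynomial LaurentPolynomial

section Semiring

variable {R : Type*} [Semiring R]

theorem coeff_T_mul_add (c : R[T;T⁻¹]) (s m : ℤ) : (T s * c).coeff (s + m) = c.coeff m := by
  rw [T, AddMonoidAlgebra.coeff_single_mul_add, one_mul]

theorem coeff_T_mul (c : R[T;T⁻¹]) (s m : ℤ) : (T s * c).coeff m = c.coeff (m - s) := by
  simpa using coeff_T_mul_add c s (m - s)

theorem coeff_toLaurent_natCast (p : R[X]) (k : ℕ) : (toLaurent p).coeff k = p.coeff k := by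
  rw [coeff_toLaurent]
  exact Finsupp.mapDomain_apply Nat.castEmbedding.injective _ k

theorem coeff_toLaurent_of_neg (p : R[X]) {m : ℤ} (hm : m < 0) : (toLaurent p).coeff m = 0 := by
  rw [coeff_toLaurent]
  refine Finsupp.mapDomain_of_notMem_range _ _ ?_
  rintro ⟨k, rfl⟩
  simp at hm
  omega

theorem exists_toLaurent_eq_of_support {c : R[T;T⁻¹]} {N : ℕ}
    (hc : ∀ m ∈ c.coeff.support, 0 ≤ m ∧ m ≤ N) :
    ∃ U : R[X], U.natDegree ≤ N ∧ toLaurent U = c := by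
  have htrunc (k : ℕ) : (trunc c).coeff k = c.coeff k := rfl
  refine ⟨trunc c, natDegree_le_iff_coeff_eq_zero.2 fun k hk => ?_, ?_⟩
  · rw [htrunc, ← Finsupp.notMem_support_iff]
    exact fun hmem => by have := hc _ hmem; omega
  · ext m
    rcases lt_or_ge m 0 with hm | hm
    · rw [coeff_toLaurent_of_neg _ hm, eq_comm, ← Finsupp.notMem_support_iff]
      exact fun hmem => by have := hc _ hmem; omega
    · lift m to ℕ using hm
      rw [coeff_toLaurent_natCast, htrunc]

end Semiring

theorem exists_toLaurent_eq_of_toLaurent_mul_eq {R : Type*} [CommRing R] [IsDomain R]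
    {p : R[X]} (hp : p.coeff 0 ≠ 0) {q : R[T;T⁻¹]} {U : R[X]}
    (hU : toLaurent p * q = toLaurent U) : ∃ f : R[X], toLaurent f = q ∧ p * f = U := by
  obtain ⟨n, F, hF⟩ := q.exists_T_pow
  have hpF : p * F = X ^ n * U := by
    apply toLaurent_injective
    rw [map_mul, map_mul, hF, toLaurent_X_pow, ← mul_assoc, hU, mul_comm]
  obtain ⟨f, rfl⟩ : X ^ n ∣ F :=
    prime_X.pow_dvd_of_dvd_mul_left n (fun hX => hp (X_dvd_iff.1 hX)) ⟨U, hpF⟩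
  refine ⟨f, ?_, ?_⟩
  · rwa [map_mul, toLaurent_X_pow, mul_comm, (isUnit_T _).mul_left_inj] at hF
  · rw [mul_left_comm] at hpF
    exact mul_left_cancel₀ (pow_ne_zero n X_ne_zero) hpF

theorem absSum_coeff_T_mul (c : ℤ[T;T⁻¹]) (s : ℤ) : absSum (T s * c).coeff = absSum c.coeff := by
  have hshift : (T s * c).coeff = c.coeff.mapDomain (s + ·) := by
    ext m
    obtain ⟨m, rfl⟩ : ∃ k, m = s + k := ⟨m - s, by ring⟩
    rw [coeff_T_mul_add, Finsupp.mapDomain_apply (add_right_injective s)]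
  rw [hshift, absSum_mapDomain (add_right_injective s)]

theorem absSum_coeff_toLaurent (p : ℤ[X]) : absSum (toLaurent p).coeff = polyS p := by
  rw [coeff_toLaurent, absSum_mapDomain Nat.castEmbedding.injective, polyS_eq_absSum]

end Laurent

section Coordinates

open LaurentPolynomial Multiplicative SemidirectProduct

/-- The sign makes `b` act by multiplication by `T 1`, so that `h(x)a` corresponds to
`toLaurent h` (see `wPoly_eq`). -/
noncomputable def baseEquiv : Multiplicative ℤ[T;T⁻¹] ≃* WreathBase Mℤ Mℤ where
  toFun c := ⟨fun x => ofAdd ((toAdd c).coeff (-toAdd x)), by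
    refine ((toAdd c).coeff.support.finite_toSet.image fun m => ofAdd (-m)).subset ?_
    intro x hx
    refine ⟨-toAdd x, Finsupp.mem_support_iff.2 fun h0 => hx ?_, by simp⟩
    simp [h0]⟩
  invFun u := ofAdd (AddMonoidAlgebra.ofCoeff (Finsupp.ofSupportFinite
    (fun m => toAdd ((u : Mℤ → Mℤ) (ofAdd (-m)))) <| by
      refine (u.2.preimage (f := fun m => ofAdd (-m))
        fun a _ b _ hab => by simpa using hab).subset ?_
      intro m hm h1
      exact hm (show toAdd ((u : Mℤ → Mℤ) (ofAdd (-m))) = 0 by rw [h1]; rfl)))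
  left_inv c := by
    ext m
    simp [Finsupp.ofSupportFinite_coe]
  right_inv u := by
    ext x
    simp [Finsupp.ofSupportFinite_coe]
  map_mul' c d := by
    ext x
    simp

theorem wreathAction_baseEquiv (s : ℤ) (c : ℤ[T;T⁻¹]) :
    wreathAction Mℤ Mℤ (ofAdd s) (baseEquiv (ofAdd c)) = baseEquiv (ofAdd (T s * c)) := by
  ext x
  show ofAdd (c.coeff (-toAdd (x * ofAdd s))) = ofAdd ((T s * c).coeff (-toAdd x))
  rw [coeff_T_mul, toAdd_mul, toAdd_ofAdd, neg_add, sub_eq_add_neg]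

/-- The element `c(x)a · bᵗ`. -/
noncomputable def ofCoords (c : ℤ[T;T⁻¹]) (t : ℤ) : ZwrZ :=
  inl (baseEquiv (ofAdd c)) * inr (ofAdd t)

theorem ofCoords_mul (c d : ℤ[T;T⁻¹]) (t s : ℤ) :
    ofCoords c t * ofCoords d s = ofCoords (c + T t * d) (t + s) := by
  ext <;> simp [ofCoords, wreathAction_baseEquiv]

theorem ofCoords_inj {c d : ℤ[T;T⁻¹]} {t s : ℤ} : ofCoords c t = ofCoords d s ↔ c = d ∧ t = s := by
  simp [ofCoords, SemidirectProduct.ext_iff]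

theorem exists_eq_ofCoords (g : ZwrZ) : ∃ c t, g = ofCoords c t :=
  ⟨toAdd (baseEquiv.symm g.left), toAdd g.right, by simp [ofCoords]⟩

theorem ofCoords_eq_inl (c : ℤ[T;T⁻¹]) : ofCoords c 0 = inl (baseEquiv (ofAdd c)) := by
  simp [ofCoords]

theorem ofCoords_eq_inr (t : ℤ) : ofCoords 0 t = inr (ofAdd t) := by
  simp [ofCoords]

theorem ofCoords_zpow (c : ℤ[T;T⁻¹]) (k : ℤ) : ofCoords c 0 ^ k = ofCoords (k • c) 0 := by
  simp only [ofCoords_eq_inl, ← map_zpow, ofAdd_zsmul]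

theorem ofCoords_zero_one_zpow (k : ℤ) : ofCoords 0 1 ^ k = ofCoords 0 k := by
  simp only [ofCoords_eq_inr, ← map_zpow, ← ofAdd_zsmul, smul_eq_mul, mul_one]

theorem toBase_ofAdd_one : toBase Mℤ Mℤ (ofAdd 1) = baseEquiv (ofAdd 1) := by
  ext x
  obtain ⟨m, rfl⟩ := ofAdd.surjective x
  simp only [toBase, baseEquiv, MulEquiv.coe_mk, Equiv.coe_fn_mk, toAdd_ofAdd, ofAdd_eq_one,
    ← single_zero_one_eq_one, AddMonoidAlgebra.coeff_single, Finsupp.single_apply]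
  split_ifs <;> first | rfl | omega

theorem aZ_eq : aZ = ofCoords 1 0 := by
  rw [ofCoords_eq_inl, aZ, ofPassive, toBase_ofAdd_one]

theorem toLaurent_eq_sum (p : Polynomial ℤ) :
    Polynomial.toLaurent p = ∑ j ∈ p.support, p.coeff j • T (j : ℤ) := by
  conv_lhs => rw [p.as_sum_support_C_mul_X_pow]
  simp only [map_sum, Polynomial.toLaurent_C_mul_X_pow, smul_eq_C_mul]

theorem wPoly_eq (h : Polynomial ℤ) : wPoly h = ofCoords (Polynomial.toLaurent h) 0 := by
  simp only [wPoly, polyElem, ofCoords_eq_inl, toLaurent_eq_sum, ofAdd_sum, map_prod,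
    ofAdd_zsmul, map_zpow, toBase_ofAdd_one, wreathAction_baseEquiv, mul_one]

theorem bZ_eq : bZ = ofCoords 0 1 := (ofCoords_eq_inr 1).symm

end Coordinates

section WordsInZwrZ

open LaurentPolynomial

/-- `gens e = {e(x)a, b}`: both `{a, b}` and `{b, w}` are of this form. -/
def gens (e : ℤ[T;T⁻¹]) : Set ZwrZ := {ofCoords e 0, ofCoords 0 1}

theorem ofCoords_mem_gens (e : ℤ[T;T⁻¹]) : ofCoords e 0 ∈ gens e := Set.mem_insert _ _

theorem ofCoords_zero_one_mem_gens (e : ℤ[T;T⁻¹]) : ofCoords 0 1 ∈ gens e :=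
  Set.mem_insert_of_mem _ rfl

theorem exists_eq_of_mem_gens {e : ℤ[T;T⁻¹]} {x : ZwrZ} (hx : x ∈ gens e ∪ (gens e)⁻¹) :
    ∃ ε : ℤ, ε.natAbs ≤ 1 ∧ (x = ofCoords (ε • e) 0 ∨ x = ofCoords 0 ε) := by
  simp only [gens, Set.mem_union, Set.mem_inv, Set.mem_insert_iff, Set.mem_singleton_iff,
    inv_eq_iff_eq_inv] at hx
  rcases hx with (rfl | rfl) | (rfl | rfl)
  · exact ⟨1, le_rfl, Or.inl (by rw [one_smul])⟩
  · exact ⟨1, le_rfl, Or.inr rfl⟩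
  · exact ⟨-1, le_rfl, Or.inl (by rw [← zpow_neg_one, ofCoords_zpow])⟩
  · exact ⟨-1, le_rfl, Or.inr (by rw [← zpow_neg_one, ofCoords_zero_one_zpow])⟩

theorem HasWord.exists_eq_ofCoords {e : ℤ[T;T⁻¹]} {g : ZwrZ} {n : ℕ}
    (hg : HasWord (gens e) g n) :
    ∃ q t, g = ofCoords (e * q) t ∧ absSum q.coeff ≤ n ∧ t.natAbs ≤ n ∧
      ∀ m ∈ q.coeff.support, m.natAbs ≤ n := by
  obtain ⟨L, hL, rfl, rfl⟩ := hg
  induction L with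
  | nil => exact ⟨0, 0, by simp [ofCoords], by simp [absSum], le_rfl, by simp⟩
  | cons x L ih =>
    obtain ⟨q, t, hprod, hq, ht, hsupp⟩ := ih fun y hy => hL y (List.mem_cons_of_mem x hy)
    simp only [List.length_cons, List.prod_cons, hprod]
    obtain ⟨ε, hε, rfl | rfl⟩ := exists_eq_of_mem_gens (hL x List.mem_cons_self)
    · have hC : (C ε).coeff = Finsupp.single 0 ε := by
        rw [← single_eq_C, AddMonoidAlgebra.coeff_single]
      refine ⟨C ε + q, t, ?_, ?_, by omega, fun m hm => ?_⟩
      · rw [ofCoords_mul, T_zero, one_mul, zero_add, smul_eq_C_mul, mul_add, mul_comm]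
      · calc absSum (C ε + q).coeff ≤ absSum (C ε).coeff + absSum q.coeff :=
              absSum_add_le _ _
          _ ≤ L.length + 1 := by rw [hC, absSum_single]; omega
      · rcases eq_or_ne m 0 with rfl | hm0
        · simp
        · rw [Finsupp.mem_support_iff, AddMonoidAlgebra.coeff_add, Finsupp.add_apply, hC,
            Finsupp.single_eq_of_ne hm0, zero_add, ← Finsupp.mem_support_iff] at hm
          exact (hsupp m hm).trans (Nat.le_succ _)
    · refine ⟨T ε * q, ε + t, ?_, ?_, by omega, fun m hm => ?_⟩
      · rw [ofCoords_mul, zero_add, mul_left_comm]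
      · rw [absSum_coeff_T_mul]; omega
      · rw [Finsupp.mem_support_iff, coeff_T_mul, ← Finsupp.mem_support_iff] at hm
        have := hsupp _ hm
        omega

theorem hasWord_gens_ofCoords_toLaurent (e : ℤ[T;T⁻¹]) {p : Polynomial ℤ} {n : ℕ}
    (hp : p.natDegree ≤ n) :
    HasWord (gens e) (ofCoords (e * Polynomial.toLaurent p) n) (polyS p + n) := by
  have ha (k : ℤ) : HasWord (gens e) (ofCoords (e * C k) 0) k.natAbs := by
    simpa [ofCoords_zpow, smul_eq_C_mul, mul_comm] using
      (HasWord.of_mem (ofCoords_mem_gens e)).zpow k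
  induction n generalizing p with
  | zero =>
    rw [Polynomial.eq_C_of_natDegree_le_zero hp, polyS_C, Polynomial.toLaurent_C]
    exact ha _
  | succ n ih =>
    have hdecomp : ofCoords (e * Polynomial.toLaurent p) ↑(n + 1) =
        ofCoords (e * C (p.coeff 0)) 0 * ofCoords 0 1 *
          ofCoords (e * Polynomial.toLaurent p.divX) n := by
      conv_lhs => rw [← p.divX_mul_X_add]
      rw [ofCoords_mul, ofCoords_mul, ofCoords_inj]
      simp only [map_add, map_mul, Polynomial.toLaurent_X, Polynomial.toLaurent_C]
      constructor <;> push_cast <;> ring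
    have hdivX : p.divX.natDegree ≤ n := by
      rw [Polynomial.natDegree_divX_eq_natDegree_tsub_one]; omega
    rw [hdecomp, polyS_eq_natAbs_coeff_zero_add_polyS_divX]
    convert ((ha _).mul (HasWord.of_mem (ofCoords_zero_one_mem_gens e))).mul (ih hdivX) using 1
    omega

theorem hasWord_gens_ofCoords_T_mul_toLaurent (e : ℤ[T;T⁻¹]) {p : Polynomial ℤ} {n : ℕ}
    (hp : p.natDegree ≤ n) (s t : ℤ) :
    HasWord (gens e) (ofCoords (e * (T s * Polynomial.toLaurent p)) t)
      (s.natAbs + (polyS p + n) + (t - s - n).natAbs) := by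
  have hb (k : ℤ) : HasWord (gens e) (ofCoords 0 k) k.natAbs := by
    simpa [ofCoords_zero_one_zpow] using
      (HasWord.of_mem (ofCoords_zero_one_mem_gens e)).zpow k
  convert ((hb s).mul (hasWord_gens_ofCoords_toLaurent e hp)).mul (hb (t - s - n)) using 1
  rw [ofCoords_mul, ofCoords_mul, ofCoords_inj]
  constructor <;> ring

end WordsInZwrZ

section DistortionFunctions

theorem le_distortion {G : Type*} [Group G] {T : Set G} (hT : T.Finite)
    (hgen : Subgroup.closure T = ⊤) {H : Subgroup G} (S : Set H) {x : H} {l : ℕ}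
    (hx : wordLength T x ≤ l) : wordLength S x ≤ distortion T H S l :=
  le_csSup ((((finite_setOf_wordLength_le hT hgen l).preimage
    Subtype.val_injective.injOn).image _).bddAbove) ⟨x, hx, rfl⟩

theorem distortion_le {G : Type*} [Group G] {T : Set G} {H : Subgroup G} {S : Set H} {l N : ℕ}
    (hN : ∀ x : H, wordLength T x ≤ l → wordLength S x ≤ N) : distortion T H S l ≤ N :=
  csSup_le ⟨_, 1, by simp [wordLength_one], rfl⟩ (by rintro _ ⟨x, hx, rfl⟩; exact hN x hx)

open Polynomial

theorem finite_setOf_natDegree_le_polyS_le (D L : ℕ) :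
    {g : ℤ[X] | g.natDegree ≤ D ∧ polyS g ≤ L}.Finite := by
  refine Set.Finite.of_finite_image (f := fun g (i : Fin (D + 1)) => g.coeff i) ?_ ?_
  · refine (Set.Finite.pi (t := fun _ => Set.Icc (-(L : ℤ)) L)
      fun _ => Set.finite_Icc _ _).subset ?_
    rintro _ ⟨g, ⟨-, hg⟩, rfl⟩ i -
    have : (g.coeff i).natAbs ≤ L := (natAbs_coeff_le_polyS g i).trans hg
    simp only [Set.mem_Icc]
    exact ⟨by omega, by omega⟩
  · rintro g ⟨hg, -⟩ g' ⟨hg', -⟩ hgg'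
    ext n
    rcases le_or_gt n D with hn | hn
    · exact congrFun hgg' ⟨n, Nat.lt_succ_of_le hn⟩
    · rw [coeff_eq_zero_of_natDegree_lt (hg.trans_lt hn),
        coeff_eq_zero_of_natDegree_lt (hg'.trans_lt hn)]

theorem bddAbove_polyDistortion_set {h : ℤ[X]} (hh : h ≠ 0) (l : ℕ) :
    BddAbove {n | ∃ f : ℤ[X], f.natDegree ≤ l ∧ polyS (h * f) ≤ l ∧ polyS f = n} := by
  have hfin := ((finite_setOf_natDegree_le_polyS_le (h.natDegree + l) l).preimage
    (mul_right_injective₀ hh).injOn).image polyS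
  refine hfin.bddAbove.mono ?_
  rintro _ ⟨f, hf, hhf, rfl⟩
  exact ⟨f, ⟨natDegree_mul_le.trans (by omega), hhf⟩, rfl⟩

theorem le_polyDistortion {h : ℤ[X]} (hh : h ≠ 0) {f : ℤ[X]} {l : ℕ} (hf : f.natDegree ≤ l)
    (hhf : polyS (h * f) ≤ l) : polyS f ≤ polyDistortion h l :=
  le_csSup (bddAbove_polyDistortion_set hh l) ⟨f, hf, hhf, rfl⟩

theorem polyDistortion_le {h : ℤ[X]} {l N : ℕ}
    (hN : ∀ f : ℤ[X], f.natDegree ≤ l → polyS (h * f) ≤ l → polyS f ≤ N) :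
    polyDistortion h l ≤ N :=
  csSup_le ⟨0, 0, by simp, by simp [polyS]⟩ (by rintro _ ⟨f, hf, hhf, rfl⟩; exact hN f hf hhf)

theorem polyDistortion_mono {h : ℤ[X]} (hh : h ≠ 0) : Monotone (polyDistortion h) :=
  fun _ _ hl => polyDistortion_le fun _ hf hhf => le_polyDistortion hh (hf.trans hl) (hhf.trans hl)

theorem le_polyDistortion_polyS_mul {h : ℤ[X]} (hh : h ≠ 0) (l : ℕ) :
    l ≤ polyDistortion h (polyS h * l) := by
  have hC : polyS (h * C (l : ℤ)) = polyS h * l := by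
    rw [polyS_mul_C, Int.natAbs_natCast]
  have := le_polyDistortion hh (f := C (l : ℤ)) ((natDegree_C _).trans_le (Nat.zero_le _)) hC.le
  rwa [polyS_C, Int.natAbs_natCast] at this

end DistortionFunctions

section Main

open LaurentPolynomial Polynomial

theorem gens_one : ({aZ, bZ} : Set ZwrZ) = gens 1 := by
  rw [aZ_eq, bZ_eq]; rfl

theorem gens_finite (e : ℤ[T;T⁻¹]) : (gens e).Finite :=
  (Set.finite_singleton _).insert _

theorem closure_gens_one : Subgroup.closure (gens 1) = ⊤ := by
  refine eq_top_iff.2 fun g _ => ?_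
  obtain ⟨c, t, rfl⟩ := exists_eq_ofCoords g
  obtain ⟨n, p, hp⟩ := c.exists_T_pow
  have hc : c = 1 * (T (-n) * toLaurent p) := by
    rw [hp, one_mul, mul_left_comm, ← T_add, neg_add_cancel, T_zero, mul_one]
  rw [hc]
  exact (hasWord_gens_ofCoords_T_mul_toLaurent 1 le_rfl _ t).mem_closure

theorem exemplary_eq_closure_gens (h : ℤ[X]) :
    exemplary h = Subgroup.closure (gens (toLaurent h)) := by
  rw [exemplary, gens, bZ_eq, wPoly_eq, Set.pair_comm]

theorem wordLength_exemplaryGens (h : ℤ[X]) (x : exemplary h) :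
    wordLength (exemplaryGens h) x = wordLength (gens (toLaurent h)) (x : ZwrZ) := by
  rw [wordLength_subtype, exemplaryGens, Set.image_pair, gens, ← bZ_eq, ← wPoly_eq, Set.pair_comm]

theorem ofCoords_toLaurent_mul_mem_closure_gens (h f : ℤ[X]) :
    ofCoords (toLaurent (h * f)) 0 ∈ Subgroup.closure (gens (toLaurent h)) := by
  have hword := hasWord_gens_ofCoords_T_mul_toLaurent (toLaurent h) le_rfl (p := f) 0 0
  rw [T_zero, one_mul, ← map_mul] at hword
  exact hword.mem_closure

theorem polyS_le_wordLength_gens {h : ℤ[X]} (hh : h ≠ 0) (f : ℤ[X]) :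
    polyS f ≤ wordLength (gens (toLaurent h)) (ofCoords (toLaurent (h * f)) 0) := by
  obtain ⟨q, t, hq, hqS, -, -⟩ :=
    (hasWord_wordLength (ofCoords_toLaurent_mul_mem_closure_gens h f)).exists_eq_ofCoords
  rw [ofCoords_inj, map_mul] at hq
  rw [← mul_left_cancel₀ (toLaurent_ne_zero.2 hh) hq.1, absSum_coeff_toLaurent] at hqS
  exact hqS

theorem dominates_polyDistortion_distortion {h : ℤ[X]} (hh : h ≠ 0) :
    Dominates (polyDistortion h) (distortion {aZ, bZ} (exemplary h) (exemplaryGens h)) := by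
  refine ⟨2 * h.natDegree + 3, by omega, fun l => polyDistortion_le fun f hf hhf => ?_⟩
  rcases eq_or_ne f 0 with rfl | hf0
  · simp [polyS]
  have hl : 0 < l := (polyS_pos (mul_ne_zero hh hf0)).trans_le hhf
  set g := ofCoords (toLaurent (h * f)) 0
  have hg : g ∈ exemplary h :=
    exemplary_eq_closure_gens h ▸ ofCoords_toLaurent_mul_mem_closure_gens h f
  have hgl : wordLength {aZ, bZ} g ≤ (2 * h.natDegree + 3) * l := by
    have hword := hasWord_gens_ofCoords_T_mul_toLaurent 1 le_rfl (p := h * f) 0 0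
    simp only [T_zero, one_mul, Int.natAbs_zero, sub_zero, zero_sub, Int.natAbs_neg,
      Int.natAbs_natCast, zero_add] at hword
    rw [gens_one]
    have hdeg := natDegree_mul_le (p := h) (q := f)
    refine hword.wordLength_le.trans ?_
    nlinarith
  calc polyS f ≤ wordLength (exemplaryGens h) ⟨g, hg⟩ := by
        rw [wordLength_exemplaryGens]; exact polyS_le_wordLength_gens hh f
    _ ≤ distortion {aZ, bZ} (exemplary h) (exemplaryGens h) ((2 * h.natDegree + 3) * l) :=
        le_distortion (gens_one ▸ gens_finite 1) (gens_one ▸ closure_gens_one) _ hgl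
    _ ≤ _ := Nat.le_mul_of_pos_left _ (by omega)

theorem exists_eq_ofCoords_of_wordLength_le {h : ℤ[X]} (h0 : h.coeff 0 ≠ 0) {x : ZwrZ}
    (hx : x ∈ exemplary h) {l : ℕ} (hxl : wordLength {aZ, bZ} x ≤ l) :
    ∃ (f : ℤ[X]) (t : ℤ), f.natDegree ≤ 2 * l ∧ polyS (h * f) ≤ l ∧ t.natAbs ≤ l ∧
      x = ofCoords (toLaurent h * (T (-l) * toLaurent f)) t := by
  have hh : h ≠ 0 := fun hh => h0 (by simp [hh])
  rw [gens_one] at hxl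
  obtain ⟨c, t, hxc, hcS, ht, hc⟩ :=
    (hasWord_wordLength (closure_gens_one ▸ Subgroup.mem_top x)).exists_eq_ofCoords
  rw [exemplary_eq_closure_gens] at hx
  obtain ⟨q, t', hxq, -, -, -⟩ := (hasWord_wordLength hx).exists_eq_ofCoords
  obtain ⟨hcq, rfl⟩ := ofCoords_inj.1 (hxc.symm.trans hxq)
  rw [one_mul] at hcq
  obtain ⟨U, hU, hUc⟩ := exists_toLaurent_eq_of_support (c := T l * c) (N := 2 * l) fun m hm => by
    rw [Finsupp.mem_support_iff, coeff_T_mul, ← Finsupp.mem_support_iff] at hm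
    have := (hc _ hm).trans hxl
    omega
  obtain ⟨f, hf, rfl⟩ := exists_toLaurent_eq_of_toLaurent_mul_eq h0 (q := T l * q)
    (by rw [hUc, hcq, mul_left_comm])
  refine ⟨f, t, ?_, ?_, ht.trans hxl, ?_⟩
  · rcases eq_or_ne f 0 with rfl | hf0
    · simp
    · exact (natDegree_le_of_dvd (dvd_mul_left f h) (mul_ne_zero hh hf0)).trans hU
  · rw [← absSum_coeff_toLaurent, hUc, absSum_coeff_T_mul]
    exact hcS.trans hxl
  · rw [hxq, hf, ← mul_assoc (T _), ← T_add, neg_add_cancel, T_zero, one_mul]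

theorem dominates_distortion_polyDistortion {h : ℤ[X]} (h0 : h.coeff 0 ≠ 0) :
    Dominates (distortion {aZ, bZ} (exemplary h) (exemplaryGens h)) (polyDistortion h) := by
  have hh : h ≠ 0 := fun hh => h0 (by simp [hh])
  refine ⟨6 * (polyS h + 2), by omega, fun l => distortion_le fun x hxl => ?_⟩
  obtain ⟨f, t, hf, hhf, ht, hx⟩ := exists_eq_ofCoords_of_wordLength_le h0 x.2 hxl
  have hx_le : wordLength (exemplaryGens h) x ≤ 5 * l + polyS f := by
    rw [wordLength_exemplaryGens, hx]
    refine (hasWord_gens_ofCoords_T_mul_toLaurent (toLaurent h) hf (-l) t).wordLength_le.trans ?_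
    omega
  set D := polyDistortion h (6 * (polyS h + 2) * l)
  have hf_le : polyS f ≤ D :=
    (le_polyDistortion hh hf (by omega)).trans (polyDistortion_mono hh (by nlinarith))
  have hl_le : l ≤ D :=
    (le_polyDistortion_polyS_mul hh l).trans (polyDistortion_mono hh (by nlinarith))
  calc wordLength (exemplaryGens h) x ≤ 5 * l + polyS f := hx_le
    _ ≤ 6 * D := by omega
    _ ≤ 6 * (polyS h + 2) * D := Nat.mul_le_mul_right _ (by omega)

end Main

/-- For `h ∈ ℤ[x]` with nonzero constant term, the distortion of the
polynomial `h` is equivalent to the distortion of the exemplary subgroup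
`H = ⟨b, h(x)a⟩` in `ℤ wr ℤ` (with generating sets `{b, w}` of `H` and `{a, b}` of
`ℤ wr ℤ`). -/
theorem statement12 (h : Polynomial ℤ) (h0 : h.coeff 0 ≠ 0) :
    DistEquiv (polyDistortion h)
      (distortion {aZ, bZ} (exemplary h) (exemplaryGens h)) :=
  ⟨dominates_polyDistortion_distortion fun hh => h0 (by simp [hh]),
    dominates_distortion_polyDistortion h0⟩

end DistortionPaper
end

section
/- Fix an integer k ≥ 1 and λ ∈ ℂ, and let A be the k × k Jordan block matrix over ℂ with eigenvalue λ: A has λ in every diagonal entry, 1 in every entry directly below the diagonal (entries (i+1, i)), and 0ated elsewhere. There exist constants d, d' > 0 depending only on k and λ such that: for every n ≥ 2, every c > 0, and all column vectors Y_1, …, Y_n, C_2, …, C_n ∈ ℂ^k satisfying Y_i = A·Y_{i−1} + C_i for i = 2, …, n, if the total sum of the moduli of all coordinates of C_2, …, C_n is at most c and every coordinate of Y_1 and of Y_n has modulus at most c, then every coordinate of every Y_i with 2 ≤ i ≤ n−1 has modulus at most d·c·n^{k−1}; moreover, if |λ| ≠ 1, then every such coordinate has modulus at most d'·c. -/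
/-!
Write the Jordan block as `λ + N` with `N` the lower shift, so coordinate `j` satisfies
`Y_i j = λ Y_{i-1} j + Y_{i-1} (j-1) + C_i j`. Once coordinate `j - 1` is bounded by `B` along the
whole sequence, a discrete Grönwall inequality bounds coordinate `j` by `2c + S B`, where `S`
bounds the partial geometric sums of `ρ = min |λ| |λ|⁻¹`: for `|λ| ≤ 1` run the recursion forwards
from `Y_1`, for `|λ| ≥ 1` run it backwards from `Y_n`, where it contracts by `|λ|⁻¹`. Induction on
`j` gives `|Y_i j| ≤ 2c (j+1) S^j`; take `S = n` in general and `S = (1 - ρ)⁻¹` when `|λ| ≠ 1`.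
-/

open scoped Pointwise

namespace DistortionPaper

/-- The `k × k` Jordan block with eigenvalue `lam`: `lam` on the diagonal and `1`
directly below the diagonal. -/
def jordanBlock (k : ℕ) (lam : ℂ) : Matrix (Fin k) (Fin k) ℂ :=
  Matrix.of fun i j => if (i : ℕ) = (j : ℕ) then lam
    else if (i : ℕ) = (j : ℕ) + 1 then 1 else 0

open Finset Matrix

theorem min_inv_le_one (x : ℝ) : min x x⁻¹ ≤ 1 := by
  rcases le_total x 1 with h | h
  · exact (min_le_left _ _).trans h
  · exact (min_le_right _ _).trans (inv_le_one_of_one_le₀ h)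

theorem min_inv_lt_one {x : ℝ} (hx : x ≠ 1) : min x x⁻¹ < 1 := by
  rcases hx.lt_or_gt with h | h
  · exact (min_le_left _ _).trans_lt h
  · exact (min_le_right _ _).trans_lt (inv_lt_one_of_one_lt₀ h)

theorem min_inv_eq_left {x : ℝ} (h0 : 0 ≤ x) (h1 : x ≤ 1) : min x x⁻¹ = x := by
  rcases h0.eq_or_lt with rfl | hpos
  · simp
  · exact min_eq_left (h1.trans ((one_le_inv₀ hpos).2 h1))

theorem min_inv_eq_right {x : ℝ} (h : 1 ≤ x) : min x x⁻¹ = x⁻¹ :=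
  min_eq_right ((inv_le_one_of_one_le₀ h).trans h)

theorem geom_sum_le_of_le_one {ρ : ℝ} (h0 : 0 ≤ ρ) (h1 : ρ ≤ 1) (m : ℕ) :
    ∑ p ∈ range m, ρ ^ p ≤ m := by
  simpa using sum_le_sum fun p (_ : p ∈ range m) => pow_le_one₀ h0 h1

theorem geom_sum_le_inv_one_sub {ρ : ℝ} (h0 : 0 ≤ ρ) (h1 : ρ < 1) (m : ℕ) :
    ∑ p ∈ range m, ρ ^ p ≤ (1 - ρ)⁻¹ := by
  rw [range_eq_Ico]
  simpa using geom_sum_Ico_le_of_lt_one (m := 0) h0 h1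

theorem le_add_geom_sum_mul_add_sum {a h : ℕ → ℝ} {ρ B : ℝ} {N : ℕ} (hρ0 : 0 ≤ ρ)
    (hρ1 : ρ ≤ 1) (ha0 : 0 ≤ a 0) (hh : ∀ m, 0 ≤ h m)
    (hrec : ∀ m < N, a (m + 1) ≤ ρ * a m + B + h m) :
    ∀ m ≤ N, a m ≤ a 0 + (∑ p ∈ range m, ρ ^ p) * B + ∑ p ∈ range m, h p := by
  intro m hm
  induction m with
  | zero => simp
  | succ m ih =>
    have hH : 0 ≤ ∑ p ∈ range m, h p := sum_nonneg fun p _ => hh p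
    calc a (m + 1) ≤ ρ * a m + B + h m := hrec m hm
      _ ≤ ρ * (a 0 + (∑ p ∈ range m, ρ ^ p) * B + ∑ p ∈ range m, h p) + B + h m := by
        gcongr; exact ih (by omega)
      _ ≤ a 0 + (ρ * ∑ p ∈ range m, ρ ^ p + 1) * B + (∑ p ∈ range m, h p + h m) := by
        nlinarith [mul_le_mul_of_nonneg_right hρ1 ha0, mul_le_mul_of_nonneg_right hρ1 hH]
      _ = _ := by rw [geom_sum_succ, sum_range_succ]

section JordanRecursion

variable {k N : ℕ} {lam : ℂ} {y e : ℕ → Fin k → ℂ} {c B S : ℝ}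

theorem jordanBlock_apply (i j : Fin k) :
    jordanBlock k lam i j = (if j = i then lam else 0) + if (j : ℕ) + 1 = i then 1 else 0 := by
  simp only [jordanBlock, of_apply, Fin.ext_iff]
  split_ifs <;> first | (exfalso; omega) | simp

theorem jordanBlock_mulVec_apply (v : Fin k → ℂ) (j : Fin k) :
    (jordanBlock k lam *ᵥ v) j =
      lam * v j + if h : 0 < (j : ℕ) then v ⟨j - 1, by omega⟩ else 0 := by
  simp only [mulVec, dotProduct, jordanBlock_apply, add_mul, ite_mul, one_mul, zero_mul,
    sum_add_distrib, sum_ite_eq', mem_univ, if_true]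
  congr 1
  split_ifs with hj
  · rw [sum_ite, sum_const_zero, add_zero, sum_eq_single_of_mem ⟨j - 1, by omega⟩]
    · simp only [mem_filter, mem_univ, true_and]; omega
    · intro x hx hne
      simp only [mem_filter, mem_univ, true_and] at hx
      exact absurd (Fin.ext (by simp; omega)) hne
  · exact sum_eq_zero fun x _ => if_neg (by omega)

theorem norm_sub_mul_le_of_jordanBlock_recursion
    (hrec : ∀ m < N, y (m + 1) = jordanBlock k lam *ᵥ y m + e m) {j : Fin k} (hB : 0 ≤ B)
    (hprev : ∀ m ≤ N, ∀ j' : Fin k, (j' : ℕ) + 1 = j → ‖y m j'‖ ≤ B) {m : ℕ} (hm : m < N) :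
    ‖y (m + 1) j - lam * y m j‖ ≤ B + ‖e m j‖ := by
  rw [hrec m hm, Pi.add_apply, jordanBlock_mulVec_apply, add_assoc, add_sub_cancel_left]
  refine (norm_add_le _ _).trans (add_le_add_left ?_ _)
  split_ifs with hj
  · exact hprev m hm.le _ (by simp only; omega)
  · simpa using hB

theorem norm_le_of_jordanBlock_recursion_of_norm_le_one
    (hrec : ∀ m < N, y (m + 1) = jordanBlock k lam *ᵥ y m + e m)
    (he : ∀ j, ∑ p ∈ range N, ‖e p j‖ ≤ c) (hy0 : ∀ j, ‖y 0 j‖ ≤ c)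
    (hlam : ‖lam‖ ≤ 1) (hgeom : ∀ m ≤ N, ∑ p ∈ range m, ‖lam‖ ^ p ≤ S) {j : Fin k}
    (hB : 0 ≤ B) (hprev : ∀ m ≤ N, ∀ j' : Fin k, (j' : ℕ) + 1 = j → ‖y m j'‖ ≤ B) :
    ∀ m ≤ N, ‖y m j‖ ≤ 2 * c + S * B := by
  have hstep : ∀ m < N, ‖y (m + 1) j‖ ≤ ‖lam‖ * ‖y m j‖ + B + ‖e m j‖ := fun m hm => by
    have hsub := norm_sub_mul_le_of_jordanBlock_recursion hrec hB hprev hm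
    have htri := norm_le_insert' (y (m + 1) j) (lam * y m j)
    rw [norm_mul] at htri
    linarith
  intro m hm
  have hsum : ∑ p ∈ range m, ‖e p j‖ ≤ c :=
    (sum_le_sum_of_subset_of_nonneg (range_mono hm) fun _ _ _ => norm_nonneg _).trans (he j)
  have := le_add_geom_sum_mul_add_sum (a := fun m => ‖y m j‖) (h := fun m => ‖e m j‖)
    (norm_nonneg lam) hlam (norm_nonneg _) (fun _ => norm_nonneg _) hstep m hm
  nlinarith [hy0 j, hgeom m hm]

theorem norm_le_of_jordanBlock_recursion_of_one_le_norm
    (hrec : ∀ m < N, y (m + 1) = jordanBlock k lam *ᵥ y m + e m)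
    (he : ∀ j, ∑ p ∈ range N, ‖e p j‖ ≤ c) (hyN : ∀ j, ‖y N j‖ ≤ c)
    (hlam : 1 ≤ ‖lam‖) (hgeom : ∀ m ≤ N, ∑ p ∈ range m, ‖lam‖⁻¹ ^ p ≤ S) {j : Fin k}
    (hB : 0 ≤ B) (hprev : ∀ m ≤ N, ∀ j' : Fin k, (j' : ℕ) + 1 = j → ‖y m j'‖ ≤ B) :
    ∀ m ≤ N, ‖y m j‖ ≤ 2 * c + S * B := by
  have hpos : 0 < ‖lam‖ := one_pos.trans_le hlam
  have hρ1 : ‖lam‖⁻¹ ≤ 1 := inv_le_one_of_one_le₀ hlam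
  have hstep : ∀ p < N, ‖y (N - (p + 1)) j‖ ≤
      ‖lam‖⁻¹ * ‖y (N - p) j‖ + B + ‖e (N - 1 - p) j‖ := fun p hp => by
    have hsub := norm_sub_mul_le_of_jordanBlock_recursion hrec hB hprev
      (m := N - (p + 1)) (by omega)
    rw [show N - (p + 1) + 1 = N - p by omega] at hsub
    rw [show N - 1 - p = N - (p + 1) by omega]
    have htri := norm_le_insert' (lam * y (N - (p + 1)) j) (y (N - p) j)
    rw [norm_mul, norm_sub_rev] at htri
    have : ‖y (N - (p + 1)) j‖ ≤ ‖lam‖⁻¹ * (‖y (N - p) j‖ + B + ‖e (N - (p + 1)) j‖) := by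
      rw [le_inv_mul_iff₀ hpos]; linarith
    nlinarith [norm_nonneg (e (N - (p + 1)) j)]
  intro m hm
  have hsum : ∑ p ∈ range (N - m), ‖e (N - 1 - p) j‖ ≤ c := by
    refine (sum_le_sum_of_subset_of_nonneg (range_mono (Nat.sub_le N m))
      fun _ _ _ => norm_nonneg _).trans ?_
    rw [sum_range_reflect (fun p => ‖e p j‖)]
    exact he j
  have := le_add_geom_sum_mul_add_sum (a := fun p => ‖y (N - p) j‖)
    (h := fun p => ‖e (N - 1 - p) j‖) (inv_nonneg.2 hpos.le) hρ1
    (norm_nonneg _) (fun _ => norm_nonneg _) hstep (N - m) (Nat.sub_le N m)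
  simp only [Nat.sub_sub_self hm, Nat.sub_zero] at this
  nlinarith [hyN j, hgeom (N - m) (Nat.sub_le N m)]

theorem norm_le_two_mul_add_of_jordanBlock_recursion
    (hrec : ∀ m < N, y (m + 1) = jordanBlock k lam *ᵥ y m + e m)
    (he : ∀ j, ∑ p ∈ range N, ‖e p j‖ ≤ c) (hy0 : ∀ j, ‖y 0 j‖ ≤ c) (hyN : ∀ j, ‖y N j‖ ≤ c)
    (hgeom : ∀ m ≤ N, ∑ p ∈ range m, min ‖lam‖ ‖lam‖⁻¹ ^ p ≤ S) {j : Fin k}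
    (hB : 0 ≤ B) (hprev : ∀ m ≤ N, ∀ j' : Fin k, (j' : ℕ) + 1 = j → ‖y m j'‖ ≤ B) :
    ∀ m ≤ N, ‖y m j‖ ≤ 2 * c + S * B := by
  rcases le_total ‖lam‖ 1 with hlam | hlam
  · rw [min_inv_eq_left (norm_nonneg _) hlam] at hgeom
    exact norm_le_of_jordanBlock_recursion_of_norm_le_one hrec he hy0 hlam hgeom hB hprev
  · rw [min_inv_eq_right hlam] at hgeom
    exact norm_le_of_jordanBlock_recursion_of_one_le_norm hrec he hyN hlam hgeom hB hprev

theorem norm_le_of_jordanBlock_recursion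
    (hrec : ∀ m < N, y (m + 1) = jordanBlock k lam *ᵥ y m + e m)
    (he : ∀ j, ∑ p ∈ range N, ‖e p j‖ ≤ c) (hy0 : ∀ j, ‖y 0 j‖ ≤ c) (hyN : ∀ j, ‖y N j‖ ≤ c)
    (hc : 0 ≤ c) (hS : 1 ≤ S) (hgeom : ∀ m ≤ N, ∑ p ∈ range m, min ‖lam‖ ‖lam‖⁻¹ ^ p ≤ S)
    (j : Fin k) : ∀ m ≤ N, ‖y m j‖ ≤ 2 * c * ((j : ℕ) + 1) * S ^ (j : ℕ) := by
  have hS0 : 0 ≤ S := zero_le_one.trans hS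
  suffices ∀ i : ℕ, ∀ j : Fin k, (j : ℕ) = i → ∀ m ≤ N, ‖y m j‖ ≤ 2 * c * (i + 1) * S ^ i from
    this j j rfl
  intro i
  induction i with
  | zero =>
    intro j _
    simpa using norm_le_two_mul_add_of_jordanBlock_recursion hrec he hy0 hyN hgeom le_rfl
      (fun _ _ j' _ => by omega)
  | succ i ih =>
    intro j hj m hm
    have hB : 0 ≤ 2 * c * (i + 1) * S ^ i := mul_nonneg (by positivity) (pow_nonneg hS0 i)
    have hSi : 1 ≤ S ^ (i + 1) := one_le_pow₀ hS
    calc ‖y m j‖ ≤ 2 * c + S * (2 * c * (i + 1) * S ^ i) :=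
          norm_le_two_mul_add_of_jordanBlock_recursion hrec he hy0 hyN hgeom hB
            (fun m hm j' hj' => ih j' (by omega) m hm) m hm
      _ = 2 * c + 2 * c * (i + 1) * S ^ (i + 1) := by ring
      _ ≤ 2 * c * ((i + 1 : ℕ) + 1) * S ^ (i + 1) := by push_cast; nlinarith

end JordanRecursion

theorem two_mul_succ_mul_pow_le {S c : ℝ} {j k : ℕ} (hjk : j < k) (hS : 1 ≤ S) (hc : 0 ≤ c) :
    2 * c * (j + 1) * S ^ j ≤ 2 * k * S ^ (k - 1) * c := by
  have hjk' : (j : ℝ) + 1 ≤ k := by exact_mod_cast hjk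
  have hpow : S ^ j ≤ S ^ (k - 1) := pow_le_pow_right₀ hS (by omega)
  have hSj : 0 ≤ S ^ j := pow_nonneg (zero_le_one.trans hS) j
  calc 2 * c * (j + 1) * S ^ j = 2 * c * ((j + 1) * S ^ j) := by ring
    _ ≤ 2 * c * (k * S ^ (k - 1)) := by gcongr
    _ = 2 * k * S ^ (k - 1) * c := by ring

theorem norm_le_of_jordanBlock_recursion_fin {k n : ℕ} {lam : ℂ} {c S : ℝ} (hn : 0 < n)
    {Y C : Fin n → Fin k → ℂ}
    (hY : ∀ i : Fin n, 1 ≤ (i : ℕ) →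
      Y i = jordanBlock k lam *ᵥ Y ⟨(i : ℕ) - 1, by omega⟩ + C i)
    (hC : ∑ i : Fin n, ∑ j : Fin k, (if 1 ≤ (i : ℕ) then ‖C i j‖ else 0) ≤ c)
    (hY0 : ∀ j, ‖Y ⟨0, hn⟩ j‖ ≤ c) (hYn : ∀ j, ‖Y ⟨n - 1, by omega⟩ j‖ ≤ c)
    (hc : 0 ≤ c) (hS : 1 ≤ S) (hgeom : ∀ m < n, ∑ p ∈ range m, min ‖lam‖ ‖lam‖⁻¹ ^ p ≤ S)
    (i : Fin n) (j : Fin k) : ‖Y i j‖ ≤ 2 * k * S ^ (k - 1) * c := by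
  obtain ⟨N, rfl⟩ : ∃ N, n = N + 1 := ⟨n - 1, by omega⟩
  let y : ℕ → Fin k → ℂ := fun m => if h : m < N + 1 then Y ⟨m, h⟩ else 0
  let e : ℕ → Fin k → ℂ := fun m => if h : m + 1 < N + 1 then C ⟨m + 1, h⟩ else 0
  have hrec : ∀ m < N, y (m + 1) = jordanBlock k lam *ᵥ y m + e m := fun m hm => by
    simpa [y, e, hm, hm.le] using hY ⟨m + 1, by omega⟩ (by simp)
  have he : ∀ j, ∑ p ∈ range N, ‖e p j‖ ≤ c := fun j => by
    calc ∑ p ∈ range N, ‖e p j‖ = ∑ i : Fin (N + 1), if 1 ≤ (i : ℕ) then ‖C i j‖ else 0 := by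
          rw [Fin.sum_univ_succ, ← Fin.sum_univ_eq_sum_range]
          simp [e, Fin.succ]
      _ ≤ ∑ i : Fin (N + 1), ∑ j : Fin k, if 1 ≤ (i : ℕ) then ‖C i j‖ else 0 :=
          sum_le_sum fun i _ => single_le_sum (f := fun j => if 1 ≤ (i : ℕ) then ‖C i j‖ else 0)
            (fun _ _ => by positivity) (mem_univ j)
      _ ≤ c := hC
  have hbound := norm_le_of_jordanBlock_recursion hrec he (by simpa [y] using hY0)
    (by simpa [y] using hYn) hc hS (fun m hm => hgeom m (by omega)) j i (by omega)
  simp only [y, dif_pos i.isLt] at hbound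
  exact hbound.trans (two_mul_succ_mul_pow_le j.isLt hS hc)

/-- bounds on the middle terms of a vector recursion `Y_i = A Y_{i-1} + C_i`
driven by a Jordan block `A` (vectors indexed here from `0` to `n-1`). -/
theorem statement19 (k : ℕ) (hk : 1 ≤ k) (lam : ℂ) :
    ∃ d d' : ℝ, 0 < d ∧ 0 < d' ∧
      ∀ (n : ℕ) (hn : 2 ≤ n) (c : ℝ) (hc : 0 < c)
        (Y C : Fin n → Fin k → ℂ),
        (∀ i : Fin n, 1 ≤ (i : ℕ) →
          Y i = (jordanBlock k lam).mulVec
            (Y ⟨(i : ℕ) - 1, by have := i.isLt; omega⟩) + C i) →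
        (∑ i : Fin n, ∑ j : Fin k,
          (if 1 ≤ (i : ℕ) then ‖C i j‖ else 0)) ≤ c →
        (∀ j : Fin k, ‖Y (⟨0, by omega⟩ : Fin n) j‖ ≤ c) →
        (∀ j : Fin k, ‖Y (⟨n - 1, by omega⟩ : Fin n) j‖ ≤ c) →
        (∀ i : Fin n, 1 ≤ (i : ℕ) → (i : ℕ) ≤ n - 2 →
          ∀ j : Fin k, ‖Y i j‖ ≤ d * c * (n : ℝ) ^ (k - 1)) ∧
        (‖lam‖ ≠ 1 →
          ∀ i : Fin n, 1 ≤ (i : ℕ) → (i : ℕ) ≤ n - 2 →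
            ∀ j : Fin k, ‖Y i j‖ ≤ d' * c) := by
  set ρ := min ‖lam‖ ‖lam‖⁻¹
  have hρ0 : 0 ≤ ρ := le_min (norm_nonneg _) (inv_nonneg.2 (norm_nonneg _))
  have hk0 : (0 : ℝ) < k := by exact_mod_cast hk
  refine ⟨2 * k, 2 * k * max 1 (1 - ρ)⁻¹ ^ (k - 1), by positivity, by positivity, ?_⟩
  intro n hn c hc Y C hY hC hY0 hYn
  refine ⟨fun i _ _ j => ?_, fun hlam i _ _ j => ?_⟩
  · have hgeom (m : ℕ) (hm : m < n) : ∑ p ∈ range m, ρ ^ p ≤ n :=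
      (geom_sum_le_of_le_one hρ0 (min_inv_le_one _) m).trans (by exact_mod_cast hm.le)
    calc ‖Y i j‖ ≤ 2 * k * (n : ℝ) ^ (k - 1) * c :=
          norm_le_of_jordanBlock_recursion_fin (by omega) hY hC hY0 hYn hc.le
            (by exact_mod_cast (by omega : 1 ≤ n)) hgeom i j
      _ = 2 * k * c * (n : ℝ) ^ (k - 1) := by ring
  · have hgeom (m : ℕ) (_ : m < n) : ∑ p ∈ range m, ρ ^ p ≤ max 1 (1 - ρ)⁻¹ :=
      (geom_sum_le_inv_one_sub hρ0 (min_inv_lt_one hlam) m).trans (le_max_right _ _)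
    exact norm_le_of_jordanBlock_recursion_fin (by omega) hY hC hY0 hYn hc.le
      (le_max_left _ _) hgeom i j

end DistortionPaper
end
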